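/- For every arrangement of n ≥ 3 lines in the plane, the number of minimum-area triangles is at most the number of triangular faces of the arrangement, and hence (by the Bader–Clément bound on Kobon triangles) at most ⌊n(n-2)/3⌋. -/

import Mathlib

/-!
A minimum-area triangle is a triangular face. Otherwise some line `K` passes through an interior
point of it, so `K` has vertices strictly on both sides and separates one vertex `v` from the
opposite side. Then `K` cuts the two sides at `v` at parameters `t₁, t₂ ∈ (0, 1]`, not both `1`,
and together with those two sides bounds a triangle whose area is `t₁ t₂` times the original one.
-/

open scoped Classical

/-- A line in the plane given by the equation `a·x + b·y = c` with `(a,b) ≠ (0,0)`. -/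
structure Line where
  a : ℝ
  b : ℝ
  c : ℝ
  hab : (a, b) ≠ (0, 0)

namespace Line

/-- The set of points of a line. -/
def pts (L : Line) : Set (ℝ × ℝ) := {p | L.a * p.1 + L.b * p.2 = L.c}

/-- The determinant of the directions of two lines. -/
def lineDet (L M : Line) : ℝ := L.a * M.b - L.b * M.a

/-- Two lines are parallel (possibly equal) when their directions are proportional. -/
def Parallel (L M : Line) : Prop := lineDet L M = 0

/-- The intersection point of two non-parallel lines. -/
noncomputable def inter (L M : Line) : ℝ × ℝ :=
  ((L.c * M.b - M.c * L.b) / lineDet L M, (L.a * M.c - M.a * L.c) / lineDet L M)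

end Line

/-- Standard Euclidean area of the triangle with vertices `p`, `q`, `r`. -/
noncomputable def triangleArea (p q r : ℝ × ℝ) : ℝ :=
  |(q.1 - p.1) * (r.2 - p.2) - (r.1 - p.1) * (q.2 - p.2)| / 2

/-- The area of the triangle determined by three (pairwise non-parallel) lines. -/
noncomputable def triArea (L M N : Line) : ℝ :=
  triangleArea (Line.inter L M) (Line.inter L N) (Line.inter M N)

/-- Three lines form a (non-degenerate) triangle when they are pairwise
non-parallel and not concurrent. -/
def FormsTriangle (L M N : Line) : Prop :=
  ¬ Line.Parallel L M ∧ ¬ Line.Parallel L N ∧ ¬ Line.Parallel M N ∧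
    Line.inter L M ∉ N.pts

/-- The open region bounded by the triangle formed by three lines: the interior
of the convex hull of the three pairwise intersection points. -/
noncomputable def openTriangle (L M N : Line) : Set (ℝ × ℝ) :=
  interior (convexHull ℝ {Line.inter L M, Line.inter L N, Line.inter M N})

theorem exists_pos_of_mem_interior_convexHull {E : Type*} [AddCommGroup E] [Module ℝ E]
    [TopologicalSpace E] {f : E →ᵃ[ℝ] ℝ} (hf : IsOpenMap f) {s : Set E} {p : E}
    (hp : p ∈ interior (convexHull ℝ s)) (hfp : f p = 0) : ∃ q ∈ s, 0 < f q := by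
  by_contra! h
  have hsub : convexHull ℝ s ⊆ f ⁻¹' Set.Iic 0 :=
    convexHull_min h ((convex_Iic 0).affine_preimage f)
  have := interior_mono (Set.image_subset_iff.mpr hsub)
    (hf.image_interior_subset _ (Set.mem_image_of_mem f hp))
  rw [interior_Iic, hfp] at this
  exact lt_irrefl 0 (Set.mem_Iio.mp this)

namespace Line

noncomputable def eval (K : Line) : ℝ × ℝ →ᵃ[ℝ] ℝ where
  toFun q := K.a * q.1 + K.b * q.2 - K.c
  linear := K.a • LinearMap.fst ℝ ℝ ℝ + K.b • LinearMap.snd ℝ ℝ ℝ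
  map_vadd' p v := by simp only [vadd_eq_add, LinearMap.add_apply, LinearMap.smul_apply,
    LinearMap.fst_apply, LinearMap.snd_apply, Prod.fst_add, Prod.snd_add, smul_eq_mul]; ring

@[simp]
lemma eval_apply (K : Line) (q : ℝ × ℝ) : K.eval q = K.a * q.1 + K.b * q.2 - K.c := rfl

lemma mem_pts_iff (K : Line) {q : ℝ × ℝ} : q ∈ K.pts ↔ K.eval q = 0 := by
  simp [pts, sub_eq_zero]

lemma sq_add_sq_pos (K : Line) : 0 < K.a ^ 2 + K.b ^ 2 := by
  have : K.a ≠ 0 ∨ K.b ≠ 0 := by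
    by_contra! h
    exact K.hab (by rw [h.1, h.2])
  rcases this with h | h <;> positivity

lemma isOpenMap_eval (K : Line) : IsOpenMap K.eval := by
  refine AffineMap.isOpenMap_linear_iff.mp (LinearMap.isOpenMap_of_finiteDimensional _ ?_)
  intro r
  refine ⟨(r / (K.a ^ 2 + K.b ^ 2)) • (K.a, K.b), ?_⟩
  have := K.sq_add_sq_pos
  change K.a * (r / (K.a ^ 2 + K.b ^ 2) * K.a) + K.b * (r / (K.a ^ 2 + K.b ^ 2) * K.b) = r
  field_simp

lemma eval_lineMap (K : Line) (p q : ℝ × ℝ) (t : ℝ) :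
    K.eval (AffineMap.lineMap p q t) = t * (K.eval q - K.eval p) + K.eval p := by
  rw [AffineMap.apply_lineMap, AffineMap.lineMap_apply_ring']

lemma lineMap_mem_pts {K : Line} {p q : ℝ × ℝ} (hp : p ∈ K.pts) (hq : q ∈ K.pts) (t : ℝ) :
    AffineMap.lineMap p q t ∈ K.pts := by
  rw [mem_pts_iff] at *
  rw [eval_lineMap, hp, hq]
  ring

lemma inter_mem_left {L M : Line} (h : ¬L.Parallel M) : inter L M ∈ L.pts := by
  change L.a * (_ / lineDet L M) + L.b * (_ / lineDet L M) = L.c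
  rw [mul_div_assoc', mul_div_assoc', ← add_div, div_eq_iff h, lineDet]
  ring

lemma inter_mem_right {L M : Line} (h : ¬L.Parallel M) : inter L M ∈ M.pts := by
  change M.a * (_ / lineDet L M) + M.b * (_ / lineDet L M) = M.c
  rw [mul_div_assoc', mul_div_assoc', ← add_div, div_eq_iff h, lineDet]
  ring

lemma eq_inter_of_mem_pts {L M : Line} (h : ¬L.Parallel M) {p : ℝ × ℝ}
    (hL : p ∈ L.pts) (hM : p ∈ M.pts) : p = inter L M := by
  change L.a * p.1 + L.b * p.2 = L.c at hL
  change M.a * p.1 + M.b * p.2 = M.c at hM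
  ext
  · rw [inter, eq_div_iff h, lineDet]
    linear_combination M.b * hL - L.b * hM
  · rw [inter, eq_div_iff h, lineDet]
    linear_combination L.a * hM - M.a * hL

lemma eval_eq_of_parallel {K X : Line} (h : K.Parallel X) {p q : ℝ × ℝ}
    (hp : p ∈ X.pts) (hq : q ∈ X.pts) : K.eval p = K.eval q := by
  have hpar : K.a * X.b - K.b * X.a = 0 := h
  change X.a * p.1 + X.b * p.2 = X.c at hp
  change X.a * q.1 + X.b * q.2 = X.c at hq
  have key : (K.eval p - K.eval q) * (X.a ^ 2 + X.b ^ 2) = 0 := by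
    simp only [eval_apply]
    linear_combination (K.a * X.a + K.b * X.b) * (hp - hq)
      + ((p.1 - q.1) * X.b - (p.2 - q.2) * X.a) * hpar
  have := X.sq_add_sq_pos
  exact sub_eq_zero.mp ((mul_eq_zero.mp key).resolve_right this.ne')

lemma exists_lineMap_mem_pts (K : Line) {v w : ℝ × ℝ} (hv : K.eval v ≠ 0)
    (hw : K.eval w * K.eval v ≤ 0) :
    ∃ t : ℝ, 0 < t ∧ t ≤ 1 ∧ (K.eval w ≠ 0 → t < 1) ∧ AffineMap.lineMap v w t ∈ K.pts := by
  have hv2 : 0 < K.eval v ^ 2 := by positivity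
  have hD : 0 < K.eval v ^ 2 - K.eval w * K.eval v := by linarith
  refine ⟨K.eval v ^ 2 / (K.eval v ^ 2 - K.eval w * K.eval v), div_pos hv2 hD,
    (div_le_one hD).mpr (by linarith), fun hw0 => (div_lt_one hD).mpr ?_, ?_⟩
  · linarith [lt_of_le_of_ne hw (mul_ne_zero hw0 hv)]
  · have : K.eval v - K.eval w ≠ 0 := fun h => hD.ne' (by linear_combination K.eval v * h)
    rw [mem_pts_iff, eval_lineMap]
    field_simp
    ring

end Line

lemma triangleArea_swap (p q r : ℝ × ℝ) : triangleArea p q r = triangleArea q p r := by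
  rw [triangleArea, triangleArea, ← abs_neg]
  ring_nf

lemma triangleArea_rotate (p q r : ℝ × ℝ) : triangleArea p q r = triangleArea q r p := by
  rw [triangleArea, triangleArea]
  ring_nf

lemma triangleArea_lineMap (v w₁ w₂ : ℝ × ℝ) (s t : ℝ) :
    triangleArea v (AffineMap.lineMap v w₁ s) (AffineMap.lineMap v w₂ t) =
      |s * t| * triangleArea v w₁ w₂ := by
  simp only [triangleArea, AffineMap.lineMap_apply_module', Prod.fst_add, Prod.snd_add,
    Prod.smul_fst, Prod.smul_snd, Prod.fst_sub, Prod.snd_sub, smul_eq_mul]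
  rw [← mul_div_assoc, ← abs_mul]
  ring_nf

lemma triangleArea_pos {X : Line} {v w₁ w₂ : ℝ × ℝ} (hv : v ∈ X.pts) (hw₁ : w₁ ∈ X.pts)
    (hne : v ≠ w₁) (hw₂ : w₂ ∉ X.pts) : 0 < triangleArea v w₁ w₂ := by
  have hd : 0 < (w₁.1 - v.1) ^ 2 + (w₁.2 - v.2) ^ 2 := by
    have : w₁.1 - v.1 ≠ 0 ∨ w₁.2 - v.2 ≠ 0 := by
      by_contra! h
      exact hne (Prod.ext (by linarith [h.1]) (by linarith [h.2]))
    rcases this with h | h <;> positivity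
  rw [Line.mem_pts_iff] at hv hw₁ hw₂
  refine div_pos (abs_pos.mpr fun hD => hw₂ ?_) two_pos
  simp only [Line.eval_apply] at hv hw₁ ⊢
  -- with `u = (X.a, X.b)`, `d = w₁ - v`, `e = w₂ - v`: `(u·e)|d|² = (e·d)(u·d) + (d×e)(d×u)`
  have key : (X.a * w₂.1 + X.b * w₂.2 - X.c) * ((w₁.1 - v.1) ^ 2 + (w₁.2 - v.2) ^ 2) = 0 := by
    linear_combination ((w₂.1 - v.1) * (w₁.1 - v.1) + (w₂.2 - v.2) * (w₁.2 - v.2)) * (hw₁ - hv)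
      + (X.b * (w₁.1 - v.1) - X.a * (w₁.2 - v.2)) * hD
      + ((w₁.1 - v.1) ^ 2 + (w₁.2 - v.2) ^ 2) * hv
  exact (mul_eq_zero.mp key).resolve_right hd.ne'

lemma formsTriangle_triArea_lt_of_separates_corner {K X Y : Line} {w₁ w₂ : ℝ × ℝ}
    (hXY : ¬X.Parallel Y) (hw₁X : w₁ ∈ X.pts) (hw₂Y : w₂ ∈ Y.pts)
    (hw₁Y : w₁ ∉ Y.pts) (hw₂X : w₂ ∉ X.pts) (hv : K.eval (Line.inter X Y) ≠ 0)
    (h₁ : K.eval w₁ * K.eval (Line.inter X Y) ≤ 0) (h₂ : K.eval w₂ * K.eval (Line.inter X Y) ≤ 0)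
    (hw : K.eval w₁ ≠ 0 ∨ K.eval w₂ ≠ 0) :
    FormsTriangle K X Y ∧ triArea K X Y < triangleArea (Line.inter X Y) w₁ w₂ := by
  set v := Line.inter X Y
  have hvX : v ∈ X.pts := Line.inter_mem_left hXY
  have hvY : v ∈ Y.pts := Line.inter_mem_right hXY
  obtain ⟨t₁, ht₁, ht₁', hw₁t, hp₁K⟩ := K.exists_lineMap_mem_pts hv h₁
  obtain ⟨t₂, ht₂, ht₂', hw₂t, hp₂K⟩ := K.exists_lineMap_mem_pts hv h₂
  have hp₁X := Line.lineMap_mem_pts hvX hw₁X t₁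
  have hp₂Y := Line.lineMap_mem_pts hvY hw₂Y t₂
  have hKX : ¬K.Parallel X := fun h =>
    hv ((K.eval_eq_of_parallel h hvX hp₁X).trans ((K.mem_pts_iff).mp hp₁K))
  have hKY : ¬K.Parallel Y := fun h =>
    hv ((K.eval_eq_of_parallel h hvY hp₂Y).trans ((K.mem_pts_iff).mp hp₂K))
  have hp₁Y : AffineMap.lineMap v w₁ t₁ ∉ Y.pts := by
    rw [Y.mem_pts_iff, Y.eval_lineMap, (Y.mem_pts_iff).mp hvY, sub_zero, add_zero]
    exact mul_ne_zero ht₁.ne' (mt (Y.mem_pts_iff).mpr hw₁Y)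
  have ht : t₁ * t₂ < 1 := by
    rcases hw with hw | hw
    · exact mul_lt_one_of_nonneg_of_lt_one_left ht₁.le (hw₁t hw) ht₂'
    · exact mul_lt_one_of_nonneg_of_lt_one_right ht₁' ht₂.le (hw₂t hw)
  have hS : 0 < triangleArea v w₁ w₂ :=
    triangleArea_pos hvX hw₁X (fun h => hw₁Y (h ▸ hvY)) hw₂X
  have hp₁ := Line.eq_inter_of_mem_pts hKX hp₁K hp₁X
  have hp₂ := Line.eq_inter_of_mem_pts hKY hp₂K hp₂Y
  refine ⟨⟨hKX, hKY, hXY, hp₁ ▸ hp₁Y⟩, ?_⟩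
  rw [triArea, ← hp₁, ← hp₂, triangleArea_rotate,
    triangleArea_rotate, triangleArea_lineMap, abs_of_pos (mul_pos ht₁ ht₂)]
  exact mul_lt_of_lt_one_left hS ht

lemma lone_sign_of_pos_of_neg {a b c : ℝ} (hpos : 0 < a ∨ 0 < b ∨ 0 < c)
    (hneg : a < 0 ∨ b < 0 ∨ c < 0) :
    (a ≠ 0 ∧ b * a ≤ 0 ∧ c * a ≤ 0 ∧ (b ≠ 0 ∨ c ≠ 0)) ∨
    (b ≠ 0 ∧ a * b ≤ 0 ∧ c * b ≤ 0 ∧ (a ≠ 0 ∨ c ≠ 0)) ∨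
    (c ≠ 0 ∧ a * c ≤ 0 ∧ b * c ≤ 0 ∧ (a ≠ 0 ∨ b ≠ 0)) := by
  simp only [mul_nonpos_iff]
  grind

lemma FormsTriangle.inter_notMem {L M N : Line} (h : FormsTriangle L M N) :
    Line.inter L M ∉ N.pts ∧ Line.inter L N ∉ M.pts ∧ Line.inter M N ∉ L.pts := by
  obtain ⟨hLM, hLN, hMN, hA⟩ := h
  refine ⟨hA, fun hB => hA ?_, fun hC => hA ?_⟩
  · rw [← Line.eq_inter_of_mem_pts hLM (Line.inter_mem_left hLN) hB]
    exact Line.inter_mem_right hLN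
  · rw [← Line.eq_inter_of_mem_pts hLM hC (Line.inter_mem_left hMN)]
    exact Line.inter_mem_right hMN

lemma exists_formsTriangle_triArea_lt_of_mem_openTriangle {L M N K : Line}
    (h : FormsTriangle L M N) {p : ℝ × ℝ} (hpK : p ∈ K.pts) (hp : p ∈ openTriangle L M N) :
    (FormsTriangle K L M ∧ triArea K L M < triArea L M N) ∨
    (FormsTriangle K L N ∧ triArea K L N < triArea L M N) ∨
    (FormsTriangle K M N ∧ triArea K M N < triArea L M N) := by
  obtain ⟨hA, hB, hC⟩ := h.inter_notMem
  obtain ⟨hLM, hLN, hMN, -⟩ := h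
  rw [K.mem_pts_iff] at hpK
  -- an interior point of the triangle lies on `K` only if `K` has vertices strictly on both sides
  have hpos := exists_pos_of_mem_interior_convexHull K.isOpenMap_eval hp hpK
  have hneg := exists_pos_of_mem_interior_convexHull (f := -K.eval)
    ((Homeomorph.neg ℝ).isOpenMap.comp K.isOpenMap_eval) hp (by simp [hpK])
  simp only [Set.mem_insert_iff, Set.mem_singleton_iff, exists_eq_or_imp, exists_eq_left,
    AffineMap.coe_neg, Pi.neg_apply, neg_pos] at hpos hneg
  rcases lone_sign_of_pos_of_neg hpos hneg with
    ⟨hv, h₁, h₂, hw⟩ | ⟨hv, h₁, h₂, hw⟩ | ⟨hv, h₁, h₂, hw⟩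
  · exact Or.inl <| formsTriangle_triArea_lt_of_separates_corner hLM (Line.inter_mem_left hLN)
      (Line.inter_mem_left hMN) hB hC hv h₁ h₂ hw
  · refine Or.inr <| Or.inl ?_
    rw [show triArea L M N = _ from triangleArea_swap _ _ _]
    exact formsTriangle_triArea_lt_of_separates_corner hLN (Line.inter_mem_left hLM)
      (Line.inter_mem_right hMN) hA hC hv h₁ h₂ hw
  · refine Or.inr <| Or.inr ?_
    rw [show triArea L M N = _ from (triangleArea_rotate _ _ _).trans (triangleArea_rotate _ _ _)]
    exact formsTriangle_triArea_lt_of_separates_corner hMN (Line.inter_mem_right hLM)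
      (Line.inter_mem_right hLN) hA hB hv h₁ h₂ hw

theorem stmt18_general (n : ℕ) (L : Fin n → Line)
    (minTris : Finset (Fin n × Fin n × Fin n))
    (hminTris : minTris = Finset.univ.filter (fun t : Fin n × Fin n × Fin n =>
      t.1 < t.2.1 ∧ t.2.1 < t.2.2 ∧ FormsTriangle (L t.1) (L t.2.1) (L t.2.2) ∧
      ∀ s : Fin n × Fin n × Fin n, FormsTriangle (L s.1) (L s.2.1) (L s.2.2) →
        triArea (L t.1) (L t.2.1) (L t.2.2) ≤ triArea (L s.1) (L s.2.1) (L s.2.2)))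
    (triFaces : Finset (Fin n × Fin n × Fin n))
    (htriFaces : triFaces = Finset.univ.filter (fun t : Fin n × Fin n × Fin n =>
      t.1 < t.2.1 ∧ t.2.1 < t.2.2 ∧ FormsTriangle (L t.1) (L t.2.1) (L t.2.2) ∧
      ∀ m : Fin n, Line.pts (L m) ∩ openTriangle (L t.1) (L t.2.1) (L t.2.2) = ∅))
    (hKobon : triFaces.card ≤ n * (n - 2) / 3) :
    minTris.card ≤ triFaces.card ∧ minTris.card ≤ n * (n - 2) / 3 := by
  have hsub : minTris ⊆ triFaces := by
    subst hminTris htriFaces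
    intro ⟨i, j, k⟩ ht
    simp only [Finset.mem_filter, Finset.mem_univ, true_and] at ht ⊢
    obtain ⟨hij, hjk, hT, hmin⟩ := ht
    refine ⟨hij, hjk, hT, fun m => Set.eq_empty_of_forall_notMem fun p ⟨hpm, hp⟩ => ?_⟩
    rcases exists_formsTriangle_triArea_lt_of_mem_openTriangle hT hpm hp with
      ⟨hF, hlt⟩ | ⟨hF, hlt⟩ | ⟨hF, hlt⟩
    · exact (hlt.trans_le (hmin (m, i, j) hF)).false
    · exact (hlt.trans_le (hmin (m, i, k) hF)).false
    · exact (hlt.trans_le (hmin (m, j, k) hF)).false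
  have hcard := Finset.card_le_card hsub
  exact ⟨hcard, hcard.trans hKobon⟩

/-- For every arrangement of `n ≥ 3` distinct lines, the number of minimum-area
triangles is at most the number of triangular faces of the arrangement, and
hence — assuming the Bader–Clément (Kobon-triangle) bound on the number of
triangular faces — at most `⌊n(n-2)/3⌋`. -/
theorem stmt18 (n : ℕ) (hn : 3 ≤ n) (L : Fin n → Line)
    (hinj : Function.Injective L)
    (minTris : Finset (Fin n × Fin n × Fin n))
    (hminTris : minTris = Finset.univ.filter (fun t : Fin n × Fin n × Fin n =>
      t.1 < t.2.1 ∧ t.2.1 < t.2.2 ∧ FormsTriangle (L t.1) (L t.2.1) (L t.2.2) ∧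
      ∀ s : Fin n × Fin n × Fin n, FormsTriangle (L s.1) (L s.2.1) (L s.2.2) →
        triArea (L t.1) (L t.2.1) (L t.2.2) ≤ triArea (L s.1) (L s.2.1) (L s.2.2)))
    (triFaces : Finset (Fin n × Fin n × Fin n))
    (htriFaces : triFaces = Finset.univ.filter (fun t : Fin n × Fin n × Fin n =>
      t.1 < t.2.1 ∧ t.2.1 < t.2.2 ∧ FormsTriangle (L t.1) (L t.2.1) (L t.2.2) ∧
      ∀ m : Fin n, Line.pts (L m) ∩ openTriangle (L t.1) (L t.2.1) (L t.2.2) = ∅))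
    (hKobon : triFaces.card ≤ n * (n - 2) / 3) :
    minTris.card ≤ triFaces.card ∧ minTris.card ≤ n * (n - 2) / 3 :=
  stmt18_general n L minTris hminTris triFaces htriFaces hKobon
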